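/- In the limit p → -1 (equivalently b → 1), the coefficients of the generating function Σ_l h_p(l) x^{2l} = (1/(1+p))[p + cosh(2(b-1) arctanh x)] converge for each l ≥ 1 to h_{-1}(l) = (4/(π² l)) Σ_{k=1}^{l} 1/(2k-1). -/

import Mathlib

open Real Finset Filter

/-- Rising factorial (Pochhammer symbol) `(a)_k = a(a+1)⋯(a+k-1)` over the reals. -/
noncomputable def poch (a : ℝ) (k : ℕ) : ℝ := ∏ j ∈ Finset.range k, (a + j)

/-- The terminating Gauss hypergeometric sum `₂F₁(-2l, b-1; b-2l; -1)`. -/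
noncomputable def hyp2F1term (b : ℝ) (l : ℕ) : ℝ :=
  ∑ k ∈ Finset.range (2 * l + 1),
    poch (-(2 * (l : ℝ))) k * poch (b - 1) k / (poch (b - 2 * l) k * (Nat.factorial k)) *
      (-1 : ℝ) ^ k

/-!
Put `n = 2l` and `a = b - 1`. Since `Γ(b)/(Γ(n+1)Γ(b-n)) = (b-n)_n/n!` and `(b-n)_n` clears
the denominators of the terminating `₂F₁`, the coefficient is `pochConv n a / ((1 + p) n!)`
with `pochConv n a = ∑ₖ (-1)^k C(n,k) (a)_k (-a)_{n-k}`. Every term of this sum has a factor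
`a`, all but the two extreme ones have `a²`, and since `n` is even the extreme ones add up to
`a ((1+a)_{n-1} - (1-a)_{n-1}) = O(a²)`. So `pochConv n a = a² Q(a)` with `Q` continuous,
while `1 + p = 1 - cos(πa) = (πa)²/2 · sinc²(πa/2)`: the `a²` cancels and the limit is
`2 Q(0) / (π² n!)`. In `Q(0)` the derivative `2 (n-1)! H_{n-1}` of the extreme terms and the
alternating harmonic sum coming from the others combine so that only odd reciprocals survive.
-/
open scoped Nat Topology

theorem neg_one_pow_sub_of_even {n k : ℕ} (hn : Even n) (hk : k ≤ n) :
    (-1 : ℝ) ^ (n - k) = (-1) ^ k := by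
  rw [← mul_right_inj' (pow_ne_zero k (neg_ne_zero.mpr one_ne_zero)), ← pow_add,
    Nat.add_sub_cancel' hk, hn.neg_one_pow, ← pow_add, ← two_mul, pow_mul, neg_one_sq, one_pow]

theorem poch_one (m : ℕ) : poch 1 m = m ! := by
  rw [poch, ← prod_range_add_one_eq_factorial, Nat.cast_prod]
  exact prod_congr rfl fun i _ => by push_cast; ring

theorem poch_add (x : ℝ) (k m : ℕ) : poch x (k + m) = poch x k * poch (x + k) m := by
  simp only [poch, prod_range_add, Nat.cast_add, add_assoc]

theorem poch_succ' (x : ℝ) (m : ℕ) : poch x (m + 1) = x * poch (x + 1) m := by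
  rw [add_comm, poch_add]
  simp [poch]

theorem poch_reflect (x : ℝ) (m : ℕ) : poch x m = (-1) ^ m * poch (1 - x - m) m := by
  have h : ∀ j ∈ range m, x + j = -1 * (1 - x - m + (m - 1 - j : ℕ)) := by
    intro j hj
    rw [mem_range] at hj
    rw [Nat.cast_sub (by omega), Nat.cast_sub (by omega)]
    push_cast
    ring
  rw [poch, prod_congr rfl h, prod_mul_distrib, prod_const, card_range, poch,
    prod_range_reflect (fun j => 1 - x - m + j)]

theorem poch_neg_natCast_mul_neg_one_pow {n k : ℕ} (hk : k ≤ n) :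
    poch (-n) k * (-1) ^ k = n.choose k * k ! := by
  obtain ⟨d, rfl⟩ : ∃ d, n = d + k := ⟨n - k, by omega⟩
  have h : 1 - -((d + k : ℕ) : ℝ) - k = ((d + 1 : ℕ) : ℝ) := by push_cast; ring
  have h' : poch ((d + 1 : ℕ) : ℝ) k = (d + 1).ascFactorial k := by
    rw [poch, Nat.ascFactorial_eq_prod_range]
    push_cast
    rfl
  rw [poch_reflect, mul_right_comm, ← mul_pow, neg_one_mul, neg_neg, one_pow, one_mul, h, h',
    Nat.ascFactorial_eq_factorial_mul_choose, Nat.cast_mul, mul_comm]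

theorem poch_ne_zero {x : ℝ} (hx : ∀ m : ℕ, x ≠ -m) (n : ℕ) : poch x n ≠ 0 :=
  prod_ne_zero_iff.mpr fun j _ h => hx j (eq_neg_of_add_eq_zero_left h)

theorem Gamma_add_natCast {x : ℝ} (hx : ∀ m : ℕ, x ≠ -m) (n : ℕ) :
    Gamma (x + n) = poch x n * Gamma x := by
  induction n with
  | zero => simp [poch]
  | succ n ih =>
    rw [Nat.cast_succ, ← add_assoc, Gamma_add_one fun h => hx n (eq_neg_of_add_eq_zero_left h),
      ih, poch, poch, prod_range_succ]
    ring

theorem Gamma_div_Gamma_mul_Gamma {x : ℝ} (hx : ∀ m : ℕ, x ≠ -m) (n : ℕ) :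
    Gamma (x + n) / (Gamma (n + 1) * Gamma x) = poch x n / n ! := by
  rw [Gamma_add_natCast hx, Gamma_nat_eq_factorial, mul_div_mul_right _ _ (Gamma_ne_zero hx)]

/-- `pochConv n a / n!` is the coefficient of `t ^ n` in
`((1 - t) / (1 + t)) ^ a = exp (-2 a artanh t)`, whence the generating function of `h_p`. -/
noncomputable def pochConv (n : ℕ) (a : ℝ) : ℝ :=
  ∑ k ∈ range (n + 1), (-1) ^ k * n.choose k * poch a k * poch (-a) (n - k)

theorem hyp2F1term_mul_poch {b : ℝ} {l : ℕ} (hb : ∀ m : ℕ, b - 2 * l ≠ -m) :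
    hyp2F1term b l * poch (b - 2 * l) (2 * l) = pochConv (2 * l) (b - 1) := by
  rw [hyp2F1term, pochConv, sum_mul]
  refine sum_congr rfl fun k hk => ?_
  have hk : k ≤ 2 * l := Nat.lt_succ_iff.mp (mem_range.mp hk)
  have hsplit : poch (b - 2 * l) (2 * l) =
      poch (b - 2 * l) k * ((-1) ^ k * poch (-(b - 1)) (2 * l - k)) := by
    conv_lhs => rw [← Nat.add_sub_cancel' hk, poch_add, poch_reflect (b - 2 * l + k)]
    rw [neg_one_pow_sub_of_even (even_two_mul l) hk]
    congr 4
    push_cast [hk]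
    ring
  have hchoose := poch_neg_natCast_mul_neg_one_pow hk
  push_cast at hchoose
  have hne : poch (b - 2 * l) k * k.factorial ≠ 0 :=
    mul_ne_zero (poch_ne_zero hb k) (Nat.cast_ne_zero.mpr k.factorial_ne_zero)
  rw [hsplit, div_mul_eq_mul_div, div_mul_eq_mul_div, div_eq_iff hne]
  linear_combination
    (poch (b - 1) k * poch (-(b - 1)) (2 * l - k) * poch (b - 2 * l) k * (-1) ^ k) * hchoose

noncomputable def pochConvInner (n : ℕ) (a : ℝ) : ℝ :=
  ∑ k ∈ Ico 1 n, (-1) ^ (k + 1) * n.choose k * poch (1 + a) (k - 1) * poch (1 - a) (n - k - 1)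

theorem pochConv_eq {n : ℕ} (hn : 1 ≤ n) (a : ℝ) :
    pochConv n a = a * ((-1) ^ n * poch (1 + a) (n - 1) - poch (1 - a) (n - 1)) +
      a ^ 2 * pochConvInner n a := by
  obtain ⟨m, rfl⟩ : ∃ m, n = m + 1 := ⟨n - 1, by omega⟩
  have hinner : ∀ i ∈ range m,
      (-1) ^ (i + 1) * ((m + 1).choose (i + 1) : ℝ) * poch a (i + 1) *
          poch (-a) (m + 1 - (i + 1)) =
        a ^ 2 * ((-1) ^ (1 + i + 1) * ((m + 1).choose (1 + i) : ℝ) *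
          poch (1 + a) (1 + i - 1) * poch (1 - a) (m + 1 - (1 + i) - 1)) := by
    intro i hi
    obtain ⟨j, rfl⟩ : ∃ j, m = i + 1 + j := ⟨m - (i + 1), by grind⟩
    rw [show i + 1 + j + 1 - (i + 1) = j + 1 by omega,
      show i + 1 + j + 1 - (1 + i) - 1 = j by omega, add_comm 1 i, Nat.add_sub_cancel,
      poch_succ', poch_succ']
    ring_nf
  rw [pochConv, sum_range_succ, sum_range_succ', sum_congr rfl hinner, ← mul_sum, pochConvInner,
    sum_Ico_eq_sum_range, Nat.add_sub_cancel, Nat.sub_zero, Nat.sub_self, poch_succ' a,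
    poch_succ' (-a)]
  simp only [Nat.choose_self, Nat.choose_zero_right, pow_zero, poch, range_zero, prod_empty]
  ring_nf

theorem hasDerivAt_poch (m : ℕ) (x : ℝ) :
    HasDerivAt (fun y => poch y m) (∑ i ∈ range m, ∏ j ∈ (range m).erase i, (x + j)) x := by
  simpa [poch] using HasDerivAt.fun_finsetProd (u := range m)
    (f := fun (j : ℕ) (y : ℝ) => y + j) fun j _ => (hasDerivAt_id x).add_const (j : ℝ)

theorem sum_prod_erase_one_add (m : ℕ) :
    ∑ i ∈ range m, ∏ j ∈ (range m).erase i, (1 + (j : ℝ)) =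
      m ! * ∑ k ∈ Ico 1 (m + 1), 1 / (k : ℝ) := by
  rw [sum_Ico_eq_sum_range, Nat.add_sub_cancel, mul_sum]
  refine sum_congr rfl fun i hi => ?_
  have hi' : (1 + i : ℝ) ≠ 0 := by positivity
  rw [← poch_one, poch, ← prod_erase_mul _ _ hi]
  push_cast
  field_simp

theorem hasDerivAt_poch_one_add_sub_poch_one_sub (m : ℕ) :
    HasDerivAt (fun a => poch (1 + a) m - poch (1 - a) m)
      (2 * (m ! * ∑ k ∈ Ico 1 (m + 1), 1 / (k : ℝ))) 0 := by
  have h₁ := (hasDerivAt_poch m (1 + 0)).comp 0 ((hasDerivAt_id (0 : ℝ)).const_add 1)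
  have h₂ := (hasDerivAt_poch m (1 - 0)).comp 0 ((hasDerivAt_id (0 : ℝ)).const_sub 1)
  refine (h₁.sub h₂).congr_deriv ?_
  simp only [add_zero, sub_zero, sum_prod_erase_one_add]
  ring

noncomputable def pochConvDivSq (n : ℕ) (a : ℝ) : ℝ :=
  dslope (fun a => poch (1 + a) (n - 1) - poch (1 - a) (n - 1)) 0 a + pochConvInner n a

theorem pochConv_eq_sq_mul {n : ℕ} (hn : Even n) (hn₁ : 1 ≤ n) (a : ℝ) :
    pochConv n a = a ^ 2 * pochConvDivSq n a := by
  have h := sub_smul_dslope (fun a => poch (1 + a) (n - 1) - poch (1 - a) (n - 1)) 0 a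
  simp only [add_zero, sub_zero, sub_self, smul_eq_mul] at h
  rw [pochConv_eq hn₁, hn.neg_one_pow, pochConvDivSq]
  linear_combination -a * h

theorem continuous_pochConvInner (n : ℕ) : Continuous (pochConvInner n) := by
  unfold pochConvInner poch
  fun_prop

theorem continuousAt_pochConvDivSq (n : ℕ) : ContinuousAt (pochConvDivSq n) 0 :=
  (continuousAt_dslope_same.mpr
    (hasDerivAt_poch_one_add_sub_poch_one_sub (n - 1)).differentiableAt).add
    (continuous_pochConvInner n).continuousAt

theorem pochConvInner_zero (n : ℕ) :
    pochConvInner n 0 = n ! * ∑ k ∈ Ico 1 n, (-1) ^ (k + 1) / (k * (n - k : ℕ) : ℝ) := by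
  rw [pochConvInner, mul_sum]
  refine sum_congr rfl fun k hk => ?_
  obtain ⟨i, rfl⟩ : ∃ i, k = i + 1 := ⟨k - 1, by grind⟩
  obtain ⟨j, rfl⟩ : ∃ j, n = i + 1 + j + 1 := ⟨n - (i + 2), by grind⟩
  have h := Nat.choose_mul_factorial_mul_factorial (show i + 1 ≤ i + 1 + j + 1 by omega)
  rw [show i + 1 + j + 1 - (i + 1) = j + 1 by omega, Nat.factorial_succ, Nat.factorial_succ] at h
  rw [show i + 1 + j + 1 - (i + 1) = j + 1 by omega, Nat.add_sub_cancel, Nat.add_sub_cancel,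
    add_zero, sub_zero, poch_one, poch_one, ← h]
  push_cast
  field_simp

theorem sum_neg_one_pow_div_mul_sub {n : ℕ} (hn : Even n) :
    ∑ k ∈ Ico 1 n, (-1) ^ (k + 1) / (k * (n - k : ℕ) : ℝ) =
      2 / n * ∑ k ∈ Ico 1 n, (-1) ^ (k + 1) / (k : ℝ) := by
  have hreflect : ∑ k ∈ Ico 1 n, (-1) ^ (k + 1) / ((n - k : ℕ) : ℝ) =
      ∑ k ∈ Ico 1 n, (-1) ^ (k + 1) / (k : ℝ) := by
    have h := sum_Ico_reflect (fun k => (-1 : ℝ) ^ (k + 1) / k) 1 (n := n) (m := n) (by omega)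
    rw [Nat.add_sub_cancel_left, Nat.add_sub_cancel] at h
    rw [← h]
    refine sum_congr rfl fun k hk => ?_
    rw [pow_succ, pow_succ, neg_one_pow_sub_of_even hn (mem_Ico.mp hk).2.le]
  calc ∑ k ∈ Ico 1 n, (-1) ^ (k + 1) / (k * (n - k : ℕ) : ℝ)
      = ∑ k ∈ Ico 1 n,
          1 / (n : ℝ) * ((-1) ^ (k + 1) / k + (-1) ^ (k + 1) / ((n - k : ℕ) : ℝ)) := by
        refine sum_congr rfl fun k hk => ?_
        have hk₁ : (1 : ℝ) ≤ k := by exact_mod_cast (mem_Ico.mp hk).1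
        have hk₂ : (k : ℝ) < n := by exact_mod_cast (mem_Ico.mp hk).2
        rw [Nat.cast_sub (mem_Ico.mp hk).2.le]
        field_simp [show (n : ℝ) ≠ 0 by linarith, show (n : ℝ) - k ≠ 0 by linarith]
        ring
    _ = 2 / n * ∑ k ∈ Ico 1 n, (-1) ^ (k + 1) / (k : ℝ) := by
        rw [← mul_sum, sum_add_distrib, hreflect]
        ring

theorem sum_Ico_one_add_neg_one_pow_div {l : ℕ} (hl : 1 ≤ l) :
    ∑ k ∈ Ico 1 (2 * l), (1 + (-1) ^ (k + 1)) / (k : ℝ) =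
      2 * ∑ k ∈ Icc 1 l, 1 / (2 * (k : ℝ) - 1) := by
  induction l, hl using Nat.le_induction with
  | base => norm_num
  | succ l hl ih =>
    rw [show 2 * (l + 1) = 2 * l + 1 + 1 by ring, sum_Ico_succ_top (by omega),
      sum_Ico_succ_top (by omega), ih, sum_Icc_succ_top (by omega)]
    simp only [pow_succ, (even_two_mul l).neg_one_pow]
    push_cast
    ring

theorem pochConvDivSq_zero {l : ℕ} (hl : 1 ≤ l) :
    pochConvDivSq (2 * l) 0 = 2 * (2 * l)! / l * ∑ k ∈ Icc 1 l, 1 / (2 * (k : ℝ) - 1) := by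
  rw [pochConvDivSq, dslope_same, (hasDerivAt_poch_one_add_sub_poch_one_sub _).deriv,
    pochConvInner_zero, sum_neg_one_pow_div_mul_sub (even_two_mul l), Nat.sub_add_cancel (by omega)]
  have hodd := sum_Ico_one_add_neg_one_pow_div hl
  simp only [add_div, sum_add_distrib] at hodd
  have hfact : ((2 * l)! : ℝ) = 2 * l * (2 * l - 1)! := by
    rw [← Nat.mul_factorial_pred (by omega)]
    push_cast
    ring
  rw [hfact]
  field_simp
  push_cast
  linear_combination (2 * l : ℝ) * hodd

theorem one_sub_cos_eq_mul_sinc_sq (x : ℝ) : 1 - cos x = x ^ 2 / 2 * sinc (x / 2) ^ 2 := by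
  rcases eq_or_ne x 0 with rfl | hx
  · simp
  rw [sinc_of_ne_zero (div_ne_zero hx two_ne_zero), div_pow, sin_sq_eq_half_sub,
    mul_div_cancel₀ x two_ne_zero]
  field_simp

theorem sub_natCast_ne_neg_natCast {b : ℝ} (hb₀ : 0 < b) (hb₁ : b < 1) (n m : ℕ) :
    b - n ≠ -m := by
  intro h
  have h₁ : (m : ℝ) < n := by linarith
  have h₂ : (m : ℝ) + 1 ≤ n := by exact_mod_cast Nat.cast_lt.mp h₁
  linarith

theorem one_add_eq_mul_sinc_sq {p : ℝ} (hp₁ : -1 ≤ p) (hp₂ : p ≤ 1) :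
    1 + p = π ^ 2 * (arccos p / π - 1) ^ 2 / 2 * sinc (π * (arccos p / π - 1) / 2) ^ 2 := by
  rw [← mul_pow, ← one_sub_cos_eq_mul_sinc_sq, mul_sub, mul_one, mul_div_cancel₀ _ pi_ne_zero,
    cos_sub_pi, cos_arccos hp₁ hp₂, sub_neg_eq_add]

theorem tendsto_arccos_div_pi_sub_one :
    Tendsto (fun p => arccos p / π - 1) (𝓝[>] (-1)) (𝓝 0) := by
  have h : Tendsto (fun p => arccos p / π - 1) (𝓝 (-1)) (𝓝 (arccos (-1) / π - 1)) :=
    ((continuous_arccos.div_const π).sub continuous_const).tendsto (-1)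
  rw [arccos_neg_one, div_self pi_ne_zero, sub_self] at h
  exact h.mono_left nhdsWithin_le_nhds

theorem Gamma_div_mul_hyp2F1term {b : ℝ} {l : ℕ} (hl : 1 ≤ l)
    (hb : ∀ m : ℕ, b - 2 * l ≠ -m) :
    Gamma b / (Gamma (2 * l + 1) * Gamma (b - 2 * l)) * hyp2F1term b l =
      (b - 1) ^ 2 * pochConvDivSq (2 * l) (b - 1) / (2 * l)! := by
  have h := Gamma_div_Gamma_mul_Gamma hb (2 * l)
  push_cast at h
  rw [sub_add_cancel] at h
  rw [h, div_mul_eq_mul_div, mul_comm, hyp2F1term_mul_poch hb,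
    pochConv_eq_sq_mul (even_two_mul l) (by omega)]

/-- In the limit `p → -1⁺` (equivalently `b → 1`), the coefficients
`h_p(l) = (1/(1+p)) Γ(b)/(Γ(2l+1)Γ(b-2l)) ₂F₁(-2l, b-1; b-2l; -1)` (with `b = (1/π)arccos p`)
converge for each `l ≥ 1` to `h_{-1}(l) = (4/(π² l)) Σ_{k=1}^{l} 1/(2k-1)`. -/
theorem hdown_limit_at_neg_one (l : ℕ) (hl : 1 ≤ l) :
    Tendsto
      (fun p : ℝ =>
        (1 / (1 + p)) *
          (Real.Gamma (Real.arccos p / π) /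
            (Real.Gamma (2 * l + 1) * Real.Gamma (Real.arccos p / π - 2 * l))) *
          hyp2F1term (Real.arccos p / π) l)
      (nhdsWithin (-1 : ℝ) (Set.Ioi (-1 : ℝ)))
      (nhds ((4 / (π ^ 2 * l)) * ∑ k ∈ Finset.Icc 1 l, 1 / (2 * (k : ℝ) - 1))) := by
  set F : ℝ → ℝ := fun a =>
    2 * pochConvDivSq (2 * l) a / (π ^ 2 * sinc (π * a / 2) ^ 2 * (2 * l)!)
  have hF : ContinuousAt F 0 :=
    (continuousAt_const.mul (continuousAt_pochConvDivSq _)).div (by fun_prop)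
      (by simp [sinc_zero, pi_ne_zero, Nat.factorial_ne_zero])
  have hF₀ : F 0 = 4 / (π ^ 2 * l) * ∑ k ∈ Icc 1 l, 1 / (2 * (k : ℝ) - 1) := by
    simp only [F, mul_zero, zero_div, sinc_zero, pochConvDivSq_zero hl]
    field_simp
    ring
  refine (hF₀ ▸ hF.tendsto.comp tendsto_arccos_div_pi_sub_one).congr' ?_
  filter_upwards [Ioo_mem_nhdsGT (show (-1 : ℝ) < 1 by norm_num)] with p ⟨hp₁, hp₂⟩
  have hp := one_add_eq_mul_sinc_sq hp₁.le hp₂.le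
  set b := arccos p / π with hb
  have hb₀ : 0 < b := div_pos (arccos_pos.mpr hp₂) pi_pos
  have hb₁ : b < 1 := (div_lt_one pi_pos).mpr (arccos_lt_pi.mpr hp₁)
  have hsinc : sinc (π * (b - 1) / 2) ≠ 0 := by
    intro h
    rw [h] at hp
    linarith
  have hΓ : ∀ m : ℕ, b - 2 * l ≠ -m := by
    exact_mod_cast sub_natCast_ne_neg_natCast hb₀ hb₁ (2 * l)
  dsimp only [Function.comp_apply, F]
  rw [mul_assoc (1 / (1 + p)), Gamma_div_mul_hyp2F1term hl hΓ, hp, ← hb]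
  field_simp [show b - 1 ≠ 0 by linarith]
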